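/- For all integers n, the q-Fibonacci polynomials satisfy the alternative recurrence f(n, x, s) = x·f(n−1, x, q·s) + q·s·f(n−2, x, q^2·s). -/

import Mathlib

open Finset

variable {K : Type*} [Field K]

noncomputable def qFibPos (q x t : K) : ℕ → K
  | 0 => 0
  | 1 => 1
  | n + 2 => x * qFibPos q x t (n + 1) + q ^ n * t * qFibPos q x t n

noncomputable def qFibNeg (q x t : K) : ℕ → K
  | 0 => 0
  | 1 => q / t
  | m + 2 => (qFibNeg q x t m - x * qFibNeg q x t (m + 1)) * q ^ (m + 2) / t

/-- The Carlitz q-Fibonacci polynomial `f(n, x, t)` for `n : ℤ`, defined by `f 0 = 0`,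
`f 1 = 1` and `f n = x * f (n-1) + q^(n-2) * t * f (n-2)`, solved backwards for `n < 0`. -/
noncomputable def qFib (q x t : K) : ℤ → K
  | Int.ofNat n => qFibPos q x t n
  | Int.negSucc m => qFibNeg q x t (m + 1)


/-! Both sides of the alternative recurrence, as functions of `n`, satisfy the defining recurrence
`g (n + 2) = x * g (n + 1) + q ^ n * s * g n` and take the values `0, 1` at `n = 0, 1`. Since the
coefficient `q ^ n * s` is invertible, such a recurrence can be run backwards as well as forwards,
so its solutions on `ℤ` are determined by these two values. -/

theorem Int.eq_of_two_term_recurrence {R : Type*} [Ring R] [NoZeroDivisors R] {f g : ℤ → R}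
    (a b : ℤ → R) (hb : ∀ n, b n ≠ 0)
    (hf : ∀ n, f (n + 2) = a n * f (n + 1) + b n * f n)
    (hg : ∀ n, g (n + 2) = a n * g (n + 1) + b n * g n)
    (h₀ : f 0 = g 0) (h₁ : f 1 = g 1) : f = g := by
  suffices h : ∀ n, f n = g n ∧ f (n + 1) = g (n + 1) from funext fun n ↦ (h n).1
  intro n
  induction n using Int.induction_on with
  | zero => exact ⟨h₀, by simpa using h₁⟩
  | succ n ih =>
    refine ⟨ih.2, ?_⟩
    rw [add_assoc, one_add_one_eq_two, hf, hg, ih.1, ih.2]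
  | pred n ih =>
    refine ⟨?_, by simpa using ih.1⟩
    have hf' := hf (-n - 1)
    have hg' := hg (-n - 1)
    simp only [show -(n : ℤ) - 1 + 2 = -n + 1 by ring, show -(n : ℤ) - 1 + 1 = -n by ring]
      at hf' hg'
    rw [ih.1, ih.2, hg', add_right_inj] at hf'
    exact (mul_left_cancel₀ (hb _) hf').symm

lemma qFib_zero (q x t : K) : qFib q x t 0 = 0 := rfl

lemma qFib_neg_one (q x t : K) : qFib q x t (-1) = q / t := rfl

lemma qFib_neg_two (q x t : K) : qFib q x t (-2) = -x * q ^ 3 / t ^ 2 := by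
  show (0 - x * (q / t)) * q ^ 2 / t = _
  ring

lemma qFib_add_two (q x t : K) (hq : q ≠ 0) (ht : t ≠ 0) (n : ℤ) :
    qFib q x t (n + 2) = x * qFib q x t (n + 1) + q ^ n * t * qFib q x t n := by
  rcases n with n | _ | _ | n
  · show qFibPos q x t (n + 2) = x * qFibPos q x t (n + 1) + q ^ (n : ℤ) * t * qFibPos q x t n
    rw [zpow_natCast, qFibPos]
  · show (1 : K) = x * 0 + q ^ (-1 : ℤ) * t * (q / t)
    field_simp
    ring
  · show (0 : K) = x * (q / t) + q ^ (-2 : ℤ) * t * ((0 - x * (q / t)) * q ^ 2 / t)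
    field_simp
    ring
  · show qFibNeg q x t (n + 1) =
      x * qFibNeg q x t (n + 2) + q ^ (-((n + 3 : ℕ) : ℤ)) * t *
        ((qFibNeg q x t (n + 1) - x * qFibNeg q x t (n + 2)) * q ^ (n + 3) / t)
    rw [zpow_neg, zpow_natCast]
    field_simp
    ring

noncomputable def qFibAlt (q x s : K) (n : ℤ) : K :=
  x * qFib q x (q * s) (n - 1) + q * s * qFib q x (q ^ 2 * s) (n - 2)

lemma qFibAlt_zero (q x s : K) (hq : q ≠ 0) (hs : s ≠ 0) : qFibAlt q x s 0 = 0 := by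
  rw [qFibAlt, zero_sub, zero_sub, qFib_neg_one, qFib_neg_two]
  field_simp
  ring

lemma qFibAlt_one (q x s : K) (hq : q ≠ 0) (hs : s ≠ 0) : qFibAlt q x s 1 = 1 := by
  rw [qFibAlt, sub_self, show (1 : ℤ) - 2 = -1 by norm_num, qFib_zero, qFib_neg_one,
    mul_zero, zero_add]
  field_simp

lemma qFibAlt_add_two (q x s : K) (hq : q ≠ 0) (hs : s ≠ 0) (n : ℤ) :
    qFibAlt q x s (n + 2) = x * qFibAlt q x s (n + 1) + q ^ n * s * qFibAlt q x s n := by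
  have h₁ := qFib_add_two q x (q * s) hq (mul_ne_zero hq hs) (n - 1)
  have h₂ := qFib_add_two q x (q ^ 2 * s) hq (mul_ne_zero (pow_ne_zero 2 hq) hs) (n - 2)
  have e₁ : q ^ (n - 1) * (q * s) = q ^ n * s := by
    rw [← mul_assoc, ← zpow_add_one₀ hq, sub_add_cancel]
  have e₂ : q ^ (n - 2) * (q ^ 2 * s) = q ^ n * s := by
    rw [← mul_assoc, ← zpow_natCast, ← zpow_add₀ hq, Nat.cast_ofNat, sub_add_cancel]
  rw [show n - 1 + 2 = n + 1 by ring, sub_add_cancel, e₁] at h₁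
  rw [sub_add_cancel, show n - 2 + 1 = n - 1 by ring, e₂] at h₂
  rw [qFibAlt, qFibAlt, qFibAlt, show n + 2 - 1 = n + 1 by ring, add_sub_cancel_right,
    add_sub_cancel_right, show n + 1 - 2 = n - 1 by ring, h₁, h₂]
  ring

theorem qFib_alt_recurrence (q x s : K) (hq : q ≠ 0) (hs : s ≠ 0) (n : ℤ) :
    qFib q x s n = x * qFib q x (q * s) (n - 1) + q * s * qFib q x (q ^ 2 * s) (n - 2) := by
  have h := Int.eq_of_two_term_recurrence (fun _ ↦ x) (fun n ↦ q ^ n * s)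
    (fun n ↦ mul_ne_zero (zpow_ne_zero n hq) hs) (qFib_add_two q x s hq hs)
    (qFibAlt_add_two q x s hq hs) (qFibAlt_zero q x s hq hs).symm (qFibAlt_one q x s hq hs).symm
  exact congrFun h n
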